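/- arXiv:1807.04810 — 2 statements merged into one kernel-verified Lean document; each statement's English description precedes it below -/
import Mathlib

section
/- For every integer n ≥ 1, define σ : V(Λ_n) → F_2 by σ(g,x) = 1 if g ∈ {(1,0,0,0),(1,0,0,1),(0,1,1,0),(0,1,1,1)} (i.e. g ∈ {a, az, bc, bcz}) and σ(g,x) = 0 otherwise. Then: (i) for every automorphism b of Λ_n that maps each fibre of Λ_n onto some fibre, the vector σ∘b + σ lies in E_1(Λ_n); and (ii) the vertices v = (id, 0) and w = (a, 0) are adjacent in Λ_n, σ(v) = 0, σ(w) = 1, and σ(u) = 0 for every neighbour u of v other than w. -/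
abbrev RSet := ZMod 2 × ZMod 2 × ZMod 2 × ZMod 2

def rmul (p q : RSet) : RSet :=
  (p.1 + q.1, p.2.1 + q.2.1, p.2.2.1 + q.2.2.1,
   p.2.2.2 + q.2.2.2 + p.2.1 * q.1 + p.2.2.1 * q.2.1 + p.2.2.1 * q.1)

def aR : RSet := (1, 0, 0, 0)
def bR : RSet := (0, 1, 0, 0)
def cR : RSet := (0, 0, 1, 0)
def idR : RSet := (0, 0, 0, 0)
def zR : RSet := (0, 0, 0, 1)
def bcR : RSet := (0, 1, 1, 0)
def bzR : RSet := (0, 1, 0, 1)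
def czR : RSet := (0, 0, 1, 1)
def bczR : RSet := (0, 1, 1, 1)

lemma rmul_aa : ∀ g : RSet, rmul aR (rmul aR g) = g := by decide
lemma rmul_bb : ∀ g : RSet, rmul bR (rmul bR g) = g := by decide
lemma rmul_cc : ∀ g : RSet, rmul cR (rmul cR g) = g := by decide

def MK : SimpleGraph RSet where
  Adj g h := g ≠ h ∧ (h = rmul aR g ∨ h = rmul bR g ∨ h = rmul cR g)
  symm := by
    constructor
    rintro g h ⟨hne, h1 | h1 | h1⟩
    · exact ⟨hne.symm, Or.inl (by rw [h1, rmul_aa])⟩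
    · exact ⟨hne.symm, Or.inr (Or.inl (by rw [h1, rmul_bb]))⟩
    · exact ⟨hne.symm, Or.inr (Or.inr (by rw [h1, rmul_cc]))⟩
  loopless := ⟨fun g hg => hg.1 rfl⟩

/-- Integer quadruples, recording voltages before reduction mod `n`. -/
abbrev ZQuad := ℤ × ℤ × ℤ × ℤ

/-- The voltage assignment `ζ` on the arcs of the Möbius–Kantor graph (with values
written in `ℤ⁴`; `e₁,…,e₄` are the standard basis vectors). -/
def zetaZ (u v : RSet) : ZQuad :=
  if u = idR ∧ v = cR then (1, 0, 0, 0)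
  else if u = cR ∧ v = bcR then (0, 1, 0, 0)
  else if u = bcR ∧ v = bzR then (0, 0, 1, 0)
  else if u = bzR ∧ v = zR then (0, 0, 0, 1)
  else if u = zR ∧ v = czR then (-1, 0, 0, 0)
  else if u = czR ∧ v = bczR then (0, -1, 0, 0)
  else if u = bczR ∧ v = bR then (0, 0, -1, 0)
  else if u = bR ∧ v = idR then (0, 0, 0, -1)
  else if u = cR ∧ v = idR then (-1, 0, 0, 0)
  else if u = bcR ∧ v = cR then (0, -1, 0, 0)
  else if u = bzR ∧ v = bcR then (0, 0, -1, 0)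
  else if u = zR ∧ v = bzR then (0, 0, 0, -1)
  else if u = czR ∧ v = zR then (1, 0, 0, 0)
  else if u = bczR ∧ v = czR then (0, 1, 0, 0)
  else if u = bR ∧ v = bczR then (0, 0, 1, 0)
  else if u = idR ∧ v = bR then (0, 0, 0, 1)
  else 0

lemma zetaZ_anti : ∀ u v : RSet, zetaZ v u = -zetaZ u v := by decide

/-- Quadruples over `ℤ/nℤ`. -/
abbrev NQuad (n : ℕ) := ZMod n × ZMod n × ZMod n × ZMod n

/-- Reduction of an integer quadruple modulo `n`. -/
def castQuad (n : ℕ) (p : ZQuad) : NQuad n :=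
  ((p.1 : ZMod n), (p.2.1 : ZMod n), (p.2.2.1 : ZMod n), (p.2.2.2 : ZMod n))

lemma castQuad_neg (n : ℕ) (p : ZQuad) : castQuad n (-p) = -castQuad n p := by
  simp [castQuad, Prod.ext_iff]

/-- The covering graph `Λ_n` of the Möbius–Kantor graph derived from the voltage
assignment `ζ` with values in `(ℤ/nℤ)⁴`. -/
def Lam (n : ℕ) : SimpleGraph (RSet × NQuad n) where
  Adj p q := MK.Adj p.1 q.1 ∧ q.2 = p.2 + castQuad n (zetaZ p.1 q.1)
  symm := by
    constructor
    rintro ⟨u, x⟩ ⟨v, y⟩ ⟨hadj, hy⟩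
    refine ⟨hadj.symm, ?_⟩
    rw [zetaZ_anti u v, castQuad_neg, hy]
    abel
  loopless := ⟨fun p hp => MK.irrefl hp.1⟩

def azR : RSet := (1, 0, 0, 1)

/-- A permutation `g` of the vertex set is an automorphism of the graph `Γ`. -/
def IsGraphAut {V : Type*} (Γ : SimpleGraph V) (g : Equiv.Perm V) : Prop :=
  ∀ u v : V, Γ.Adj (g u) (g v) ↔ Γ.Adj u v

open scoped Classical in
/-- The 1-eigenspace of the adjacency matrix of `Λ` over `F₂`. -/
noncomputable def eigOne {V : Type*} [Fintype V] (Λ : SimpleGraph V) :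
    Submodule (ZMod 2) (V → ZMod 2) :=
  LinearMap.ker (Matrix.toLin' (Λ.adjMatrix (ZMod 2)) - LinearMap.id)

/-- The vector `σ : V(Λ_n) → F₂` supported on the fibres over `a`, `az`, `bc`, `bcz`. -/
def sigmaVec (n : ℕ) : RSet × NQuad n → ZMod 2 :=
  fun p => if p.1 = aR ∨ p.1 = azR ∨ p.1 = bcR ∨ p.1 = bczR then 1 else 0

/-!
`σ` is the pullback of the indicator `χ` of `{a, az, bc, bcz}` along the covering
`Λ_n → MK`, and every vertex `w` of `MK` has exactly `1 + χ w` neighbours in that set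
(mod 2); since a covering is bijective on neighbourhoods, `A σ = σ + 1` for the adjacency
operator `A` of `Λ_n`. An automorphism `b` commutes with `A`, so `A (σ ∘ b) = σ ∘ b + 1`
too, and over `𝔽₂` the difference `σ ∘ b + σ` is fixed by `A`.
-/

open Matrix

namespace SimpleGraph

variable {V W : Type*} [Fintype V] [Fintype W]

theorem adjMatrix_mulVec_comp_of_bijOn_neighborSet {R : Type*} [NonAssocSemiring R]
    {Λ : SimpleGraph V} {Γ : SimpleGraph W} [DecidableRel Λ.Adj] [DecidableRel Γ.Adj]
    (φ : V → W) (hφ : ∀ v, Set.BijOn φ (Λ.neighborSet v) (Γ.neighborSet (φ v)))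
    (f : W → R) :
    Λ.adjMatrix R *ᵥ (f ∘ φ) = (Γ.adjMatrix R *ᵥ f) ∘ φ := by
  funext v
  simp only [Function.comp_apply, adjMatrix_mulVec_apply]
  obtain ⟨hmaps, hinj, hsurj⟩ := hφ v
  refine Finset.sum_nbij φ (fun u hu => ?_) (by simpa using hinj) (by simpa using hsurj)
    fun _ _ => rfl
  simpa using hmaps (by simpa using hu)

theorem mem_eigOne_iff (Λ : SimpleGraph V) [DecidableRel Λ.Adj] (f : V → ZMod 2) :
    f ∈ eigOne Λ ↔ Λ.adjMatrix (ZMod 2) *ᵥ f = f := by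
  classical
  obtain rfl : ‹DecidableRel Λ.Adj› = fun _ _ => Classical.propDecidable _ :=
    Subsingleton.elim _ _
  rw [eigOne, LinearMap.mem_ker, LinearMap.sub_apply, LinearMap.id_apply, sub_eq_zero,
    Matrix.toLin'_apply]

theorem add_mem_eigOne {Λ : SimpleGraph V} [DecidableRel Λ.Adj] {f₁ f₂ c : V → ZMod 2}
    (h₁ : Λ.adjMatrix (ZMod 2) *ᵥ f₁ = f₁ + c) (h₂ : Λ.adjMatrix (ZMod 2) *ᵥ f₂ = f₂ + c) :
    f₁ + f₂ ∈ eigOne Λ := by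
  have hc : c + c = 0 := funext fun v => CharTwo.add_self_eq_zero (c v)
  rw [mem_eigOne_iff, Matrix.mulVec_add, h₁, h₂, add_add_add_comm, hc, add_zero]

end SimpleGraph

theorem IsGraphAut.bijOn_neighborSet {V : Type*} {Γ : SimpleGraph V} {g : Equiv.Perm V}
    (hg : IsGraphAut Γ g) (v : V) :
    Set.BijOn g (Γ.neighborSet v) (Γ.neighborSet (g v)) := by
  refine ⟨fun u hu => (hg v u).mpr hu, g.injective.injOn, fun w hw => ⟨g.symm w, ?_, by simp⟩⟩
  rw [SimpleGraph.mem_neighborSet, ← hg, Equiv.apply_symm_apply]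
  exact hw

instance : DecidableRel MK.Adj := fun g h => inferInstanceAs (Decidable (g ≠ h ∧ _))

instance (n : ℕ) : DecidableRel (Lam n).Adj := fun _ _ => inferInstanceAs (Decidable (_ ∧ _))

def chiMK (u : RSet) : ZMod 2 :=
  if u = aR ∨ u = azR ∨ u = bcR ∨ u = bczR then 1 else 0

theorem sigmaVec_eq_comp_fst (n : ℕ) : sigmaVec n = chiMK ∘ Prod.fst := rfl

theorem MK_adjMatrix_mulVec_chiMK : MK.adjMatrix (ZMod 2) *ᵥ chiMK = chiMK + 1 := by
  decide

theorem Lam_adj_mk_of_adj (n : ℕ) (p : RSet × NQuad n) {u : RSet} (hu : MK.Adj p.1 u) :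
    (Lam n).Adj p (u, p.2 + castQuad n (zetaZ p.1 u)) :=
  ⟨hu, rfl⟩

theorem Lam_adj_eq_of_fst_eq {n : ℕ} {p q q' : RSet × NQuad n} (hq : (Lam n).Adj p q)
    (hq' : (Lam n).Adj p q') (h : q.1 = q'.1) : q = q' :=
  Prod.ext h (by rw [hq.2, hq'.2, h])

theorem bijOn_fst_neighborSet_Lam (n : ℕ) (p : RSet × NQuad n) :
    Set.BijOn Prod.fst ((Lam n).neighborSet p) (MK.neighborSet p.1) :=
  ⟨fun _ hq => hq.1, fun _ hq _ hq' => Lam_adj_eq_of_fst_eq hq hq',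
    fun _ hu => ⟨_, Lam_adj_mk_of_adj n p hu, rfl⟩⟩

theorem Lam_adjMatrix_mulVec_sigmaVec (n : ℕ) [NeZero n] :
    (Lam n).adjMatrix (ZMod 2) *ᵥ sigmaVec n = sigmaVec n + 1 := by
  rw [sigmaVec_eq_comp_fst, SimpleGraph.adjMatrix_mulVec_comp_of_bijOn_neighborSet _
    (bijOn_fst_neighborSet_Lam n), MK_adjMatrix_mulVec_chiMK]
  rfl

/-- The vector `σ` satisfies: (i) `σ∘b + σ ∈ E₁(Λ_n)` for every fibre-preserving
automorphism `b` of `Λ_n`; and (ii) `v = (id,0)` and `w = (a,0)` are adjacent, with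
`σ(v) = 0`, `σ(w) = 1` and `σ(u) = 0` for every other neighbour `u` of `v`. -/
theorem statement14 (n : ℕ) (hn : 1 ≤ n) :
    haveI : NeZero n := ⟨by omega⟩
    (∀ g : Equiv.Perm (RSet × NQuad n), IsGraphAut (Lam n) g →
      (∀ u : RSet, ∃ u' : RSet,
        g '' {p : RSet × NQuad n | p.1 = u} = {p : RSet × NQuad n | p.1 = u'}) →
      (fun p => sigmaVec n (g p) + sigmaVec n p) ∈ eigOne (Lam n)) ∧
    (Lam n).Adj (idR, 0) (aR, 0) ∧
    sigmaVec n (idR, 0) = 0 ∧ sigmaVec n (aR, 0) = 1 ∧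
    (∀ u : RSet × NQuad n, (Lam n).Adj (idR, 0) u → u ≠ (aR, 0) → sigmaVec n u = 0) := by
  have : NeZero n := ⟨by omega⟩
  have hσ := Lam_adjMatrix_mulVec_sigmaVec n
  have hadj : (Lam n).Adj (idR, 0) (aR, 0) := by
    have hζ : zetaZ idR aR = 0 := by decide
    refine ⟨show MK.Adj idR aR by decide, ?_⟩
    simp [hζ, castQuad, Prod.ext_iff]
  refine ⟨fun g hg _ => ?_, hadj, show chiMK idR = 0 by decide, show chiMK aR = 1 by decide,
    fun u hu hne => ?_⟩
  · have hσg : (Lam n).adjMatrix (ZMod 2) *ᵥ (sigmaVec n ∘ g) = sigmaVec n ∘ g + 1 := by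
      rw [SimpleGraph.adjMatrix_mulVec_comp_of_bijOn_neighborSet _ hg.bijOn_neighborSet, hσ]
      rfl
    exact SimpleGraph.add_mem_eigOne hσg hσ
  · have hu₁ : u.1 ≠ aR := fun h => hne (Lam_adj_eq_of_fst_eq hu hadj h)
    have hχ : ∀ v, MK.Adj idR v → v ≠ aR → chiMK v = 0 := by decide
    exact hχ u.1 hu.1 hu₁
end

section
/- Let Λ be a finite connected 3-regular simple graph admitting an arc-transitive group G ≤ Aut(Λ), and suppose dim_{F_2} E_1(Λ) ≥ 2. Then for every vertex v of Λ with neighbourhood {v1, v2, v3}, the set {(x(v1), x(v2), x(v3)) : x ∈ E_1(Λ), x(v) = 0} equals the even-weight subspace {(0,0,0),(1,1,0),(1,0,1),(0,1,1)} of F_2³; in particular it has exactly 4 elements. -/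
/-- The subgroup `G` acts transitively on the arcs of `Γ`. -/
def ArcTransitiveOn {V : Type*} (Γ : SimpleGraph V) (G : Subgroup (Equiv.Perm V)) : Prop :=
  ∀ u v u' v' : V, Γ.Adj u v → Γ.Adj u' v' → ∃ g ∈ G, g u = u' ∧ g v = v'

open scoped Classical in
private lemma mem_eigOne_iff' {V : Type*} [Fintype V] (Λ : SimpleGraph V) (x : V → ZMod 2) :
    x ∈ eigOne Λ ↔ ∀ w : V, ∑ u ∈ Λ.neighborFinset w, x u = x w := by
  have h : x ∈ eigOne Λ ↔ Matrix.toLin' (Λ.adjMatrix (ZMod 2)) x = x := by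
    rw [eigOne, LinearMap.mem_ker, LinearMap.sub_apply, LinearMap.id_apply, sub_eq_zero]
  rw [h]
  constructor
  · intro h1 w
    have := congrFun h1 w
    rwa [Matrix.toLin'_apply, SimpleGraph.adjMatrix_mulVec_apply] at this
  · intro h1
    funext w
    rw [Matrix.toLin'_apply, SimpleGraph.adjMatrix_mulVec_apply]
    exact h1 w

private lemma comp_mem_eigOne' {V : Type*} [Fintype V] (Λ : SimpleGraph V) (g : Equiv.Perm V)
    (hg : IsGraphAut Λ g) (x : V → ZMod 2) (hx : x ∈ eigOne Λ) :
    (fun u => x (g u)) ∈ eigOne Λ := by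
  classical
  rw [mem_eigOne_iff'] at hx ⊢
  intro w
  have himg : (Λ.neighborFinset w).image g = Λ.neighborFinset (g w) := by
    ext u
    simp only [Finset.mem_image, SimpleGraph.mem_neighborFinset]
    constructor
    · rintro ⟨a, ha, rfl⟩; exact (hg w a).mpr ha
    · intro hu
      refine ⟨g.symm u, ?_, g.apply_symm_apply u⟩
      have h2 : Λ.Adj (g w) (g (g.symm u)) := by rwa [g.apply_symm_apply]
      exact (hg w _).mp h2
  calc ∑ u ∈ Λ.neighborFinset w, x (g u)
      = ∑ u ∈ (Λ.neighborFinset w).image g, x u :=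
        (Finset.sum_image (fun a _ b _ h => g.injective h)).symm
    _ = ∑ u ∈ Λ.neighborFinset (g w), x u := by rw [himg]
    _ = x (g w) := hx (g w)

/-- If `Λ` is a finite connected cubic graph with an arc-transitive group of automorphisms
and `dim E₁(Λ) ≥ 2`, then for any vertex `v` with neighbourhood `{v₁,v₂,v₃}`, the
restrictions to the neighbourhood of vectors of `E₁(Λ)` vanishing at `v` form the
even-weight subspace of `F₂³`; in particular there are exactly 4 of them. -/
theorem statement17 {V : Type*} [Fintype V] (Λ : SimpleGraph V) (hconn : Λ.Connected)
    (hreg : ∀ v : V, Nat.card (Λ.neighborSet v) = 3)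
    (G : Subgroup (Equiv.Perm V)) (hGaut : ∀ g ∈ G, IsGraphAut Λ g)
    (hGt : ArcTransitiveOn Λ G)
    (hd : 2 ≤ Module.finrank (ZMod 2) (eigOne Λ))
    (v v1 v2 v3 : V) (h12 : v1 ≠ v2) (h13 : v1 ≠ v3) (h23 : v2 ≠ v3)
    (hN : Λ.neighborSet v = {v1, v2, v3}) :
    {t : ZMod 2 × ZMod 2 × ZMod 2 |
        ∃ x ∈ eigOne Λ, x v = 0 ∧ t = (x v1, x v2, x v3)} =
      {(0, 0, 0), (1, 1, 0), (1, 0, 1), (0, 1, 1)} ∧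
    Set.ncard {t : ZMod 2 × ZMod 2 × ZMod 2 |
        ∃ x ∈ eigOne Λ, x v = 0 ∧ t = (x v1, x v2, x v3)} = 4 := by
  classical
  have two : ∀ z : ZMod 2, z = 0 ∨ z = 1 := by decide
  have hA1 : Λ.Adj v v1 := by rw [← SimpleGraph.mem_neighborSet, hN]; left; rfl
  have hA2 : Λ.Adj v v2 := by rw [← SimpleGraph.mem_neighborSet, hN]; right; left; rfl
  have hA3 : Λ.Adj v v3 := by rw [← SimpleGraph.mem_neighborSet, hN]; right; right; rfl
  have hadj_cases : ∀ u, Λ.Adj v u → u = v1 ∨ u = v2 ∨ u = v3 := by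
    intro u hu
    have : u ∈ Λ.neighborSet v := hu
    rw [hN] at this
    simpa using this
  have hNF : Λ.neighborFinset v = {v1, v2, v3} := by
    ext u
    simp only [SimpleGraph.mem_neighborFinset, Finset.mem_insert, Finset.mem_singleton]
    constructor
    · intro hu; exact hadj_cases u hu
    · rintro (rfl | rfl | rfl) <;> assumption
  have hsum3 : ∀ x : V → ZMod 2, ∑ u ∈ Λ.neighborFinset v, x u = x v1 + x v2 + x v3 := by
    intro x
    rw [hNF, Finset.sum_insert (by simp [h12, h13]),
      Finset.sum_insert (by simp [h23]), Finset.sum_singleton, add_assoc]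
  have heigv : ∀ x ∈ eigOne Λ, x v1 + x v2 + x v3 = x v := by
    intro x hx
    rw [← hsum3]
    exact (mem_eigOne_iff' Λ x).mp hx v
  -- main existence statement
  have main : ∃ x ∈ eigOne Λ, x v = 0 ∧ ∃ k, Λ.Adj v k ∧ x k = 0 ∧
      ∀ u, Λ.Adj v u → u ≠ k → x u = 1 := by
    rcases Classical.em (∀ x ∈ eigOne Λ, x v = 0 → x v1 = 0 ∧ x v2 = 0 ∧ x v3 = 0) with H0 | H0
    · exfalso
      have hzero : ∀ x ∈ eigOne Λ, x v = 0 → x = 0 := by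
        intro x hx hxv
        have step : ∀ a b : V, Λ.Adj a b → x a = 0 → x b = 0 := by
          intro a b hab ha
          obtain ⟨g, hgG, hgv, hgv1⟩ := hGt v v1 a b hA1 hab
          have hy := comp_mem_eigOne' Λ g (hGaut g hgG) x hx
          have hy0 : (fun u => x (g u)) v = 0 := by simpa [hgv] using ha
          have h3 := H0 _ hy hy0
          simpa [hgv1] using h3.1
        have walkzero : ∀ (a b : V), Λ.Walk a b → x a = 0 → x b = 0 := by
          intro a b p
          induction p with
          | nil => exact id
          | cons h _ ih => intro ha; exact ih (step _ _ h ha)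
        funext b
        obtain ⟨p⟩ := hconn.preconnected v b
        simpa using walkzero v b p hxv
      have hinj : Function.Injective
          ((LinearMap.proj v : (V → ZMod 2) →ₗ[ZMod 2] ZMod 2).comp (eigOne Λ).subtype) := by
        rw [← LinearMap.ker_eq_bot, LinearMap.ker_eq_bot']
        intro m hm
        simp only [LinearMap.comp_apply, Submodule.subtype_apply, LinearMap.proj_apply] at hm
        exact Subtype.ext (hzero m.1 m.2 hm)
      have hle := LinearMap.finrank_le_finrank_of_injective hinj
      rw [Module.finrank_self] at hle
      omega
    · push_neg at H0
      obtain ⟨x, hx, hxv, hne⟩ := H0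
      refine ⟨x, hx, hxv, ?_⟩
      have hsum : x v1 + x v2 + x v3 = 0 := by rw [heigv x hx, hxv]
      rcases two (x v1) with h1 | h1 <;> rcases two (x v2) with h2 | h2 <;>
        rcases two (x v3) with h3 | h3 <;> rw [h1, h2, h3] at hsum <;>
        first
        | exact absurd hsum (by decide)
        | exact absurd h3 (hne h1 h2)
        | · refine ⟨v3, hA3, h3, ?_⟩
            intro u hu hune
            rcases hadj_cases u hu with rfl | rfl | rfl
            · exact h1
            · exact h2
            · exact absurd rfl hune
        | · refine ⟨v2, hA2, h2, ?_⟩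
            intro u hu hune
            rcases hadj_cases u hu with rfl | rfl | rfl
            · exact h1
            · exact absurd rfl hune
            · exact h3
        | · refine ⟨v1, hA1, h1, ?_⟩
            intro u hu hune
            rcases hadj_cases u hu with rfl | rfl | rfl
            · exact absurd rfl hune
            · exact h2
            · exact h3
  have build : ∀ (x : V → ZMod 2), x ∈ eigOne Λ → x v = 0 →
      ∀ k, Λ.Adj v k → x k = 0 → (∀ u, Λ.Adj v u → u ≠ k → x u = 1) →
      ∀ j, Λ.Adj v j →
      ∃ y ∈ eigOne Λ, y v = 0 ∧ y j = 0 ∧ ∀ u, Λ.Adj v u → u ≠ j → y u = 1 := by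
    intro x hx hxv k hk hxk hothers j hj
    obtain ⟨g, hgG, hgv, hgj⟩ := hGt v j v k hj hk
    have haut := hGaut g hgG
    refine ⟨fun u => x (g u), comp_mem_eigOne' Λ g haut x hx,
      by simpa [hgv] using hxv, by simpa [hgj] using hxk, ?_⟩
    intro u hu hne
    have hadjgu : Λ.Adj v (g u) := by
      have := (haut v u).mpr hu
      rwa [hgv] at this
    have hgune : g u ≠ k := by
      rw [← hgj]
      exact fun h => hne (g.injective h)
    exact hothers (g u) hadjgu hgune
  obtain ⟨x₀, hx₀, hx₀v, k, hk, hk0, hko⟩ := main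
  have mem000 : ((0 : ZMod 2), (0 : ZMod 2), (0 : ZMod 2)) ∈
      {t : ZMod 2 × ZMod 2 × ZMod 2 |
        ∃ x ∈ eigOne Λ, x v = 0 ∧ t = (x v1, x v2, x v3)} :=
    ⟨0, (eigOne Λ).zero_mem, rfl, rfl⟩
  have mem110 : ((1 : ZMod 2), (1 : ZMod 2), (0 : ZMod 2)) ∈
      {t : ZMod 2 × ZMod 2 × ZMod 2 |
        ∃ x ∈ eigOne Λ, x v = 0 ∧ t = (x v1, x v2, x v3)} := by
    obtain ⟨y, hy, hyv, hyj, hyo⟩ := build x₀ hx₀ hx₀v k hk hk0 hko v3 hA3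
    exact ⟨y, hy, hyv, by rw [hyo v1 hA1 h13, hyo v2 hA2 h23, hyj]⟩
  have mem101 : ((1 : ZMod 2), (0 : ZMod 2), (1 : ZMod 2)) ∈
      {t : ZMod 2 × ZMod 2 × ZMod 2 |
        ∃ x ∈ eigOne Λ, x v = 0 ∧ t = (x v1, x v2, x v3)} := by
    obtain ⟨y, hy, hyv, hyj, hyo⟩ := build x₀ hx₀ hx₀v k hk hk0 hko v2 hA2
    exact ⟨y, hy, hyv, by rw [hyo v1 hA1 h12, hyo v3 hA3 (Ne.symm h23), hyj]⟩
  have mem011 : ((0 : ZMod 2), (1 : ZMod 2), (1 : ZMod 2)) ∈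
      {t : ZMod 2 × ZMod 2 × ZMod 2 |
        ∃ x ∈ eigOne Λ, x v = 0 ∧ t = (x v1, x v2, x v3)} := by
    obtain ⟨y, hy, hyv, hyj, hyo⟩ := build x₀ hx₀ hx₀v k hk hk0 hko v1 hA1
    exact ⟨y, hy, hyv, by rw [hyo v2 hA2 (Ne.symm h12), hyo v3 hA3 (Ne.symm h13), hyj]⟩
  have hset : {t : ZMod 2 × ZMod 2 × ZMod 2 |
        ∃ x ∈ eigOne Λ, x v = 0 ∧ t = (x v1, x v2, x v3)} =
      {(0, 0, 0), (1, 1, 0), (1, 0, 1), (0, 1, 1)} := by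
    ext t
    constructor
    · rintro ⟨x, hx, hxv, rfl⟩
      have hsum : x v1 + x v2 + x v3 = 0 := by rw [heigv x hx, hxv]
      simp only [Set.mem_insert_iff, Set.mem_singleton_iff, Prod.mk.injEq]
      rcases two (x v1) with h1 | h1 <;> rcases two (x v2) with h2 | h2 <;>
        rcases two (x v3) with h3 | h3 <;> rw [h1, h2, h3] at hsum <;>
        first
        | exact absurd hsum (by decide)
        | tauto
    · intro ht
      simp only [Set.mem_insert_iff, Set.mem_singleton_iff] at ht
      rcases ht with rfl | rfl | rfl | rfl
      exacts [mem000, mem110, mem101, mem011]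
  refine ⟨hset, ?_⟩
  rw [hset]
  rw [show ({(0, 0, 0), (1, 1, 0), (1, 0, 1), (0, 1, 1)} :
      Set (ZMod 2 × ZMod 2 × ZMod 2)) =
      (↑({(0, 0, 0), (1, 1, 0), (1, 0, 1), (0, 1, 1)} :
        Finset (ZMod 2 × ZMod 2 × ZMod 2)) : Set _) by simp]
  rw [Set.ncard_coe_finset]
  decide
end
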